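/- arXiv:2406.07220 — 5 statements merged into one kernel-verified Lean document; each statement's English description precedes it below -/
import Mathlib

section
/- Let (Ω, 𝔽, ℙ) be a probability space, H a real Hilbert space, T > 0, τ ∈ (0, 1], and N ∈ ℕ with N τ ≤ T. Let u : {0, …, N} → H (the exact trajectory at the time points tⁿ = nτ), let Ψ : ℝ × H → H, and define the deterministic iterates û⁰ = u⁰, û^{n+1} = Ψ(tⁿ, ûⁿ). Assume: (i) there are constants C, q > 0 with ‖u^n − ûⁿ‖ ≤ C τ^q for all n ≤ N; (ii) there is a constant L_Ψ > 0 with ‖Ψ(t, v₁) − Ψ(t, v₂)‖ ≤ (1 + L_Ψ τ) ‖v₁ − v₂‖ for all t ∈ [0, T] and v₁, v₂ ∈ H. Let U⁰ = u⁰ and U^{n+1} = Ψ(tⁿ, Uⁿ) + ξⁿ, where each random variable ξⁿ : Ω → H is square-integrable, satisfies 𝔼‖ξⁿ‖² ≤ C_ξ τ^{2p+1} for constants C_ξ, p > 0, and satisfies 𝔼⟨Ψ(tⁿ, ûⁿ) − Ψ(tⁿ, Uⁿ), ξⁿ⟩ = 0 for each n, and assume each Uⁿ is square-integrable. Then there exists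 a constant C' > 0 depending only on T, C, L_Ψ, C_ξ (and not on τ or n) such that max_{0 ≤ n ≤ N} ( 𝔼‖uⁿ − Uⁿ‖² )^{1/2} ≤ C' τ^{min{p, q}}. -/
/-! Write `û` for the deterministic iterates and split `u - U = (u - û) + (û - U)`; the first part
is the deterministic error `C τ^q`. For `eₙ = 𝔼‖ûⁿ - Uⁿ‖²`, the orthogonality hypothesis removes the
cross term in `‖(Ψ(tⁿ, ûⁿ) - Ψ(tⁿ, Uⁿ)) - ξⁿ‖²`, so the Lipschitz bound gives
`eₙ₊₁ ≤ (1 + L_Ψ τ)² eₙ + C_ξ τ^{2p+1}`. By the discrete Grönwall inequality the at most `T / τ`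
local contributions add up to `eₙ ≤ T C_ξ exp(L_Ψ (2 + L_Ψ) T) τ^{2p}`. -/

open MeasureTheory Real

namespace MeasureTheory

variable {Ω E : Type*} [MeasurableSpace Ω] {μ : Measure Ω} [NormedAddCommGroup E]

lemma MemLp.integrable_norm_sq {f : Ω → E} (hf : MemLp f 2 μ) :
    Integrable (fun ω => ‖f ω‖ ^ 2) μ :=
  hf.integrable_norm_pow two_ne_zero

lemma integral_norm_sub_sq_le_two_mul [IsProbabilityMeasure μ] (a b : E) {X : Ω → E}
    (hX : MemLp X 2 μ) :
    ∫ ω, ‖a - X ω‖ ^ 2 ∂μ ≤ 2 * ‖a - b‖ ^ 2 + 2 * ∫ ω, ‖b - X ω‖ ^ 2 ∂μ := by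
  have hbX : Integrable (fun ω => ‖b - X ω‖ ^ 2) μ :=
    ((memLp_const b).sub hX).integrable_norm_sq
  calc ∫ ω, ‖a - X ω‖ ^ 2 ∂μ ≤ ∫ ω, (2 * ‖a - b‖ ^ 2 + 2 * ‖b - X ω‖ ^ 2) ∂μ := by
        refine integral_mono ((memLp_const a).sub hX).integrable_norm_sq
          ((integrable_const _).add (hbX.const_mul 2)) fun ω => ?_
        have := norm_sub_le_norm_sub_add_norm_sub a b (X ω)
        nlinarith [norm_nonneg (a - X ω), sq_nonneg (‖a - b‖ - ‖b - X ω‖)]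
    _ = 2 * ‖a - b‖ ^ 2 + 2 * ∫ ω, ‖b - X ω‖ ^ 2 ∂μ := by
        rw [integral_add (integrable_const _) (hbX.const_mul 2), integral_const, integral_const_mul]
        simp

variable [InnerProductSpace ℝ E]

lemma MemLp.integrable_inner {f g : Ω → E} (hf : MemLp f 2 μ) (hg : MemLp g 2 μ) :
    Integrable (fun ω => inner ℝ (f ω) (g ω)) μ :=
  (L2.integrable_inner (hf.toLp f) (hg.toLp g)).congr <| by
    filter_upwards [hf.coeFn_toLp, hg.coeFn_toLp] with ω hfω hgω
    simp only [hfω, hgω]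

lemma integral_norm_sub_sq_of_integral_inner_eq_zero {X ξ : Ω → E} (hX : MemLp X 2 μ)
    (hξ : MemLp ξ 2 μ) (horth : ∫ ω, inner ℝ (X ω) (ξ ω) ∂μ = 0) :
    ∫ ω, ‖X ω - ξ ω‖ ^ 2 ∂μ = ∫ ω, ‖X ω‖ ^ 2 ∂μ + ∫ ω, ‖ξ ω‖ ^ 2 ∂μ := by
  have hinner : Integrable (fun ω => 2 * inner ℝ (X ω) (ξ ω)) μ :=
    (hX.integrable_inner hξ).const_mul 2
  simp_rw [norm_sub_sq_real]
  rw [integral_add (f := fun ω => ‖X ω‖ ^ 2 - 2 * inner ℝ (X ω) (ξ ω))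
      (hX.integrable_norm_sq.sub hinner) hξ.integrable_norm_sq,
    integral_sub hX.integrable_norm_sq hinner, integral_const_mul, horth, mul_zero, sub_zero]

lemma integral_norm_sub_add_sq_le [IsFiniteMeasure μ] {Φ : E → E} {K : ℝ}
    (hΦ : ∀ v w, ‖Φ v - Φ w‖ ≤ K * ‖v - w‖) (a : E) {X ξ : Ω → E} (hX : MemLp X 2 μ)
    (hΦX : MemLp (fun ω => Φ (X ω)) 2 μ) (hξ : MemLp ξ 2 μ)
    (horth : ∫ ω, inner ℝ (Φ a - Φ (X ω)) (ξ ω) ∂μ = 0) :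
    ∫ ω, ‖Φ a - (Φ (X ω) + ξ ω)‖ ^ 2 ∂μ ≤
      K ^ 2 * ∫ ω, ‖a - X ω‖ ^ 2 ∂μ + ∫ ω, ‖ξ ω‖ ^ 2 ∂μ := by
  simp_rw [← sub_sub]
  rw [integral_norm_sub_sq_of_integral_inner_eq_zero (X := fun ω => Φ a - Φ (X ω))
      ((memLp_const _).sub hΦX) hξ horth,
    ← integral_const_mul]
  gcongr ?_ + _
  refine integral_mono ((memLp_const _).sub hΦX).integrable_norm_sq
    (((memLp_const a).sub hX).integrable_norm_sq.const_mul _) fun ω => ?_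
  simpa only [mul_pow] using pow_le_pow_left₀ (norm_nonneg _) (hΦ a (X ω)) 2

end MeasureTheory

theorem discrete_gronwall_const {u : ℕ → ℝ} {b c : ℝ} {N : ℕ} (hu_nonneg : ∀ n ≤ N, 0 ≤ u n)
    (hu : ∀ n < N, u (n + 1) ≤ (1 + c) * u n + b) (hc : 0 ≤ c) (hb : 0 ≤ b) {n : ℕ}
    (hn : n ≤ N) : u n ≤ (u 0 + n * b) * exp (n * c) := by
  -- the truncation makes the recursion hold beyond `N`, as `discrete_gronwall` requires
  set v : ℕ → ℝ := fun m => if m ≤ N then u m else 0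
  have hv : ∀ m ≥ 0, v (m + 1) ≤ (1 + c) * v m + b := by
    intro m _
    by_cases hm : m < N
    · simpa [v, hm.le, Nat.succ_le_of_lt hm] using hu m hm
    · have : 0 ≤ (1 + c) * v m := by
        unfold v; split_ifs with h
        · exact mul_nonneg (by linarith) (hu_nonneg m h)
        · simp
      simpa [v, show ¬ m + 1 ≤ N by omega] using add_nonneg this hb
  have := discrete_gronwall (u := v) (b := fun _ => b) (c := fun _ => c)
    (by simpa [v] using hu_nonneg 0 (Nat.zero_le N)) hv (fun _ _ => hc) (fun _ _ => hb)
    (Nat.zero_le n)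
  simpa [v, hn] using this

theorem global_mean_square_convergence_general
    {Ω : Type*} [MeasurableSpace Ω] (ℙ : Measure Ω) [IsProbabilityMeasure ℙ]
    {H : Type*} [NormedAddCommGroup H] [InnerProductSpace ℝ H]
    (T C Lψ Cξ p q : ℝ) (hT : 0 < T) (hC : 0 < C) (hLψ : 0 < Lψ) (hCξ : 0 < Cξ) :
    ∃ C' > 0, ∀ (τ : ℝ), 0 < τ → τ ≤ 1 → ∀ (N : ℕ), N * τ ≤ T →
      ∀ (u : ℕ → H) (Ψ : ℝ → H → H) (uDet : ℕ → H) (ξ : ℕ → Ω → H) (U : ℕ → Ω → H),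
        uDet 0 = u 0 →
        (∀ n, uDet (n + 1) = Ψ ((n : ℝ) * τ) (uDet n)) →
        (∀ n ≤ N, ‖u n - uDet n‖ ≤ C * τ ^ q) →
        (∀ t ∈ Set.Icc (0 : ℝ) T, ∀ v₁ v₂ : H,
          ‖Ψ t v₁ - Ψ t v₂‖ ≤ (1 + Lψ * τ) * ‖v₁ - v₂‖) →
        (∀ ω, U 0 ω = u 0) →
        (∀ n ω, U (n + 1) ω = Ψ ((n : ℝ) * τ) (U n ω) + ξ n ω) →
        (∀ n, MemLp (ξ n) 2 ℙ) →
        (∀ n, ∫ ω, ‖ξ n ω‖ ^ 2 ∂ℙ ≤ Cξ * τ ^ (2 * p + 1)) →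
        (∀ n : ℕ, ∫ ω, (inner ℝ (Ψ ((n : ℝ) * τ) (uDet n) - Ψ ((n : ℝ) * τ) (U n ω)) (ξ n ω) : ℝ) ∂ℙ = 0) →
        (∀ n, MemLp (U n) 2 ℙ) →
        ∀ n ≤ N, (∫ ω, ‖u n - U n ω‖ ^ 2 ∂ℙ) ^ ((1 : ℝ) / 2) ≤ C' * τ ^ min p q := by
  refine ⟨2 * (C + √(T * Cξ * exp (Lψ * (2 + Lψ) * T))), by positivity, ?_⟩
  intro τ hτ hτ1 N hNT u Ψ uDet ξ U hDet0 hDetRec hdet hLip hU0 hURec hξL2 hξbd horth hUL2 n hnN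
  set K := T * Cξ * exp (Lψ * (2 + Lψ) * T)
  have hΨU : ∀ m : ℕ, MemLp (fun ω => Ψ (m * τ) (U m ω)) 2 ℙ := fun m => by
    convert (hUL2 (m + 1)).sub (hξL2 m) using 1
    ext ω
    simp [hURec]
  have hstep : ∀ m < N, ∫ ω, ‖uDet (m + 1) - U (m + 1) ω‖ ^ 2 ∂ℙ ≤
      (1 + Lψ * τ * (2 + Lψ * τ)) * ∫ ω, ‖uDet m - U m ω‖ ^ 2 ∂ℙ + Cξ * τ ^ (2 * p + 1) := by
    intro m hm
    have htm : (m : ℝ) * τ ∈ Set.Icc 0 T :=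
      ⟨by positivity, le_trans (by gcongr) hNT⟩
    simp only [hDetRec, hURec]
    calc _ ≤ _ := integral_norm_sub_add_sq_le (hLip _ htm) _ (hUL2 m) (hΨU m) (hξL2 m) (horth m)
      _ ≤ _ := by
        rw [show (1 + Lψ * τ) ^ 2 = 1 + Lψ * τ * (2 + Lψ * τ) by ring]
        gcongr
        exact hξbd m
  have hnT : (n : ℝ) * τ ≤ T := le_trans (by gcongr) hNT
  have hgap : ∫ ω, ‖uDet n - U n ω‖ ^ 2 ∂ℙ ≤ (√K * τ ^ p) ^ 2 := by
    refine (discrete_gronwall_const (u := fun m => ∫ ω, ‖uDet m - U m ω‖ ^ 2 ∂ℙ) (fun _ _ =>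
      integral_nonneg fun _ => sq_nonneg _) hstep (by positivity) (by positivity) hnN).trans ?_
    have hτp : τ ^ (2 * p + 1) = (τ ^ p) ^ 2 * τ := by
      rw [rpow_add hτ, rpow_one, mul_comm 2 p, rpow_mul hτ.le, rpow_two]
    calc (∫ ω, ‖uDet 0 - U 0 ω‖ ^ 2 ∂ℙ + n * (Cξ * τ ^ (2 * p + 1))) *
          exp (n * (Lψ * τ * (2 + Lψ * τ)))
        = (n * τ) * Cξ * exp (Lψ * (2 + Lψ * τ) * (n * τ)) * (τ ^ p) ^ 2 := by
          simp only [hU0, hDet0, sub_self, norm_zero, hτp, zero_pow two_ne_zero, integral_zero,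
            zero_add]
          ring_nf
      _ ≤ T * Cξ * exp (Lψ * (2 + Lψ) * T) * (τ ^ p) ^ 2 := by
          gcongr
          exact mul_le_of_le_one_right hLψ.le hτ1
      _ = (√K * τ ^ p) ^ 2 := by rw [mul_pow, sq_sqrt (by positivity)]
  have hmse : ∫ ω, ‖u n - U n ω‖ ^ 2 ∂ℙ ≤ (2 * (C + √K) * τ ^ min p q) ^ 2 := by
    have hτq : τ ^ q ≤ τ ^ min p q := rpow_le_rpow_of_exponent_ge hτ hτ1 (min_le_right p q)
    have hτp : τ ^ p ≤ τ ^ min p q := rpow_le_rpow_of_exponent_ge hτ hτ1 (min_le_left p q)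
    calc ∫ ω, ‖u n - U n ω‖ ^ 2 ∂ℙ
        ≤ 2 * ‖u n - uDet n‖ ^ 2 + 2 * ∫ ω, ‖uDet n - U n ω‖ ^ 2 ∂ℙ :=
          integral_norm_sub_sq_le_two_mul _ _ (hUL2 n)
      _ ≤ 2 * (C * τ ^ min p q) ^ 2 + 2 * (√K * τ ^ min p q) ^ 2 := by
          gcongr
          · exact (hdet n hnN).trans (by gcongr)
          · exact hgap.trans (by gcongr)
      _ ≤ (2 * (C + √K) * τ ^ min p q) ^ 2 := by
          nlinarith [mul_nonneg (mul_nonneg hC.le (sqrt_nonneg K)) (sq_nonneg (τ ^ min p q))]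
  rw [← sqrt_eq_rpow, sqrt_le_left (by positivity)]
  exact hmse

/-- Global mean square convergence of randomized time integrators. -/
theorem global_mean_square_convergence
    {Ω : Type*} [MeasurableSpace Ω] (ℙ : Measure Ω) [IsProbabilityMeasure ℙ]
    {H : Type*} [NormedAddCommGroup H] [InnerProductSpace ℝ H]
    (T C Lψ Cξ p q : ℝ) (hT : 0 < T) (hC : 0 < C) (hLψ : 0 < Lψ) (hCξ : 0 < Cξ)
    (hp : 0 < p) (hq : 0 < q) :
    ∃ C' > 0, ∀ (τ : ℝ), 0 < τ → τ ≤ 1 → ∀ (N : ℕ), N * τ ≤ T →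
      ∀ (u : ℕ → H) (Ψ : ℝ → H → H) (uDet : ℕ → H) (ξ : ℕ → Ω → H) (U : ℕ → Ω → H),
        uDet 0 = u 0 →
        (∀ n, uDet (n + 1) = Ψ ((n : ℝ) * τ) (uDet n)) →
        (∀ n ≤ N, ‖u n - uDet n‖ ≤ C * τ ^ q) →
        (∀ t ∈ Set.Icc (0 : ℝ) T, ∀ v₁ v₂ : H,
          ‖Ψ t v₁ - Ψ t v₂‖ ≤ (1 + Lψ * τ) * ‖v₁ - v₂‖) →
        (∀ ω, U 0 ω = u 0) →
        (∀ n ω, U (n + 1) ω = Ψ ((n : ℝ) * τ) (U n ω) + ξ n ω) →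
        (∀ n, MemLp (ξ n) 2 ℙ) →
        (∀ n, ∫ ω, ‖ξ n ω‖ ^ 2 ∂ℙ ≤ Cξ * τ ^ (2 * p + 1)) →
        (∀ n : ℕ, ∫ ω, (inner ℝ (Ψ ((n : ℝ) * τ) (uDet n) - Ψ ((n : ℝ) * τ) (U n ω)) (ξ n ω) : ℝ) ∂ℙ = 0) →
        (∀ n, MemLp (U n) 2 ℙ) →
        ∀ n ≤ N, (∫ ω, ‖u n - U n ω‖ ^ 2 ∂ℙ) ^ ((1 : ℝ) / 2) ≤ C' * τ ^ min p q :=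
  global_mean_square_convergence_general ℙ T C Lψ Cξ p q hT hC hLψ hCξ
end

section
/- Let H be a real inner product space, K ⊆ H a linear subspace, and A : H → H a linear map such that ⟨A w, w⟩ ≥ 0 for all w ∈ K. Let L_f ≥ 0 and 0 < τ ≤ τ* < 1/(2 L_f). Suppose w₀, w₁ ∈ K and r ∈ H satisfy ‖r‖ ≤ L_f ‖w₁‖ and the variational identity ⟨w₁ − w₀, z⟩ + τ ⟨A w₁, z⟩ = τ ⟨r, z⟩ for all z ∈ K. Then ‖w₁‖ ≤ (1 − 2 L_f τ)^{−1/2} ‖w₀‖ ≤ (1 + L_Ψ τ) ‖w₀‖, where L_Ψ = 2 L_f / (1 − 2 L_f τ*). -/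
/-!
Testing the variational identity with `z = w₁` and using `⟪A w₁, w₁⟫ ≥ 0` gives
`⟪w₁ - w₀, w₁⟫ ≤ L_f τ ‖w₁‖²`; together with `⟪w₀, w₁⟫ ≤ (‖w₀‖² + ‖w₁‖²) / 2` this is the energy
estimate `(1 - 2 L_f τ) ‖w₁‖² ≤ ‖w₀‖²`, whence the first bound. The second follows from
`u^(-1/2) ≤ u⁻¹` for `u ∈ (0, 1]` and `(1 - a)⁻¹ = 1 + a / (1 - a)`.
-/

open RealInnerProductSpace

theorem one_sub_two_mul_mul_norm_sq_le_of_inner_sub_le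
    {H : Type*} [NormedAddCommGroup H] [InnerProductSpace ℝ H]
    {w₀ w₁ : H} {c : ℝ} (h : ⟪w₁ - w₀, w₁⟫ ≤ c * ‖w₁‖ ^ 2) :
    (1 - 2 * c) * ‖w₁‖ ^ 2 ≤ ‖w₀‖ ^ 2 := by
  have hcs : ⟪w₀, w₁⟫ ≤ ‖w₀‖ * ‖w₁‖ := real_inner_le_norm w₀ w₁
  rw [inner_sub_left, real_inner_self_eq_norm_sq] at h
  nlinarith [sq_nonneg (‖w₀‖ - ‖w₁‖)]

theorem inner_sub_le_of_variational {H : Type*} [NormedAddCommGroup H] [InnerProductSpace ℝ H]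
    (K : Submodule ℝ H) (A : H →ₗ[ℝ] H) (hA : ∀ w ∈ K, 0 ≤ ⟪A w, w⟫)
    {L τ : ℝ} (hτ : 0 ≤ τ) {w₀ w₁ r : H} (hw₁ : w₁ ∈ K) (hr : ‖r‖ ≤ L * ‖w₁‖)
    (hvar : ∀ z ∈ K, ⟪w₁ - w₀, z⟫ + τ * ⟪A w₁, z⟫ = τ * ⟪r, z⟫) :
    ⟪w₁ - w₀, w₁⟫ ≤ L * τ * ‖w₁‖ ^ 2 := by
  have hrw : ⟪r, w₁⟫ ≤ L * ‖w₁‖ * ‖w₁‖ :=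
    (real_inner_le_norm r w₁).trans (mul_le_mul_of_nonneg_right hr (norm_nonneg _))
  have hτA : 0 ≤ τ * ⟪A w₁, w₁⟫ := mul_nonneg hτ (hA w₁ hw₁)
  nlinarith [hvar w₁ hw₁, mul_le_mul_of_nonneg_left hrw hτ]

theorem Real.le_rpow_neg_half_mul_of_mul_sq_le {u x y : ℝ} (hu : 0 < u) (hx : 0 ≤ x) (hy : 0 ≤ y)
    (h : u * x ^ 2 ≤ y ^ 2) : x ≤ u ^ (-(1 : ℝ) / 2) * y := by
  have hsqrt : √u * x ≤ y := by
    simpa [Real.sqrt_mul hu.le, Real.sqrt_sq hx, Real.sqrt_sq hy] using Real.sqrt_le_sqrt h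
  rw [neg_div, Real.rpow_neg hu.le, ← Real.sqrt_eq_rpow, inv_mul_eq_div,
    le_div_iff₀ (Real.sqrt_pos.mpr hu)]
  linarith

theorem Real.rpow_neg_half_le_inv {u : ℝ} (hu₀ : 0 < u) (hu₁ : u ≤ 1) :
    u ^ (-(1 : ℝ) / 2) ≤ u⁻¹ := by
  rw [← Real.rpow_neg_one]
  exact Real.rpow_le_rpow_of_exponent_ge hu₀ hu₁ (by norm_num)

theorem inv_one_sub_le_one_add_div {a b : ℝ} (ha : 0 ≤ a) (hab : a ≤ b) (hb : b < 1) :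
    (1 - a)⁻¹ ≤ 1 + a / (1 - b) := by
  have h1b : 0 < 1 - b := by linarith
  have h1a : 0 < 1 - a := by linarith
  have hdiv : a / (1 - a) ≤ a / (1 - b) := div_le_div_of_nonneg_left ha h1b (by linarith)
  calc (1 - a)⁻¹ = 1 + a / (1 - a) := by field_simp; ring
    _ ≤ 1 + a / (1 - b) := by linarith

theorem implicit_euler_lipschitz_general
    {H : Type*} [NormedAddCommGroup H] [InnerProductSpace ℝ H]
    (K : Submodule ℝ H) (A : H →ₗ[ℝ] H)
    (hA : ∀ w ∈ K, (0 : ℝ) ≤ inner ℝ (A w) w)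
    (Lf τ τs : ℝ) (hLf : 0 ≤ Lf) (hτ : 0 < τ) (hττs : τ ≤ τs) (hτs : 2 * Lf * τs < 1)
    (w₀ w₁ r : H) (hw₁ : w₁ ∈ K)
    (hr : ‖r‖ ≤ Lf * ‖w₁‖)
    (hvar : ∀ z ∈ K, (inner ℝ (w₁ - w₀) z : ℝ) + τ * inner ℝ (A w₁) z = τ * inner ℝ r z) :
    ‖w₁‖ ≤ (1 - 2 * Lf * τ) ^ (-(1 : ℝ) / 2) * ‖w₀‖ ∧
    (1 - 2 * Lf * τ) ^ (-(1 : ℝ) / 2) * ‖w₀‖ ≤ (1 + (2 * Lf / (1 - 2 * Lf * τs)) * τ) * ‖w₀‖ := by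
  have hLτ : 0 ≤ 2 * Lf * τ := by positivity
  have hLττs : 2 * Lf * τ ≤ 2 * Lf * τs := by gcongr
  have hu : 0 < 1 - 2 * Lf * τ := by linarith
  have henergy : (1 - 2 * Lf * τ) * ‖w₁‖ ^ 2 ≤ ‖w₀‖ ^ 2 := by
    simpa [mul_assoc] using one_sub_two_mul_mul_norm_sq_le_of_inner_sub_le
      (inner_sub_le_of_variational K A hA hτ.le hw₁ hr hvar)
  refine ⟨Real.le_rpow_neg_half_mul_of_mul_sq_le hu (norm_nonneg _) (norm_nonneg _) henergy, ?_⟩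
  gcongr
  calc (1 - 2 * Lf * τ) ^ (-(1 : ℝ) / 2) ≤ (1 - 2 * Lf * τ)⁻¹ :=
        Real.rpow_neg_half_le_inv hu (by linarith)
    _ ≤ 1 + 2 * Lf * τ / (1 - 2 * Lf * τs) := inv_one_sub_le_one_add_div hLτ hLττs hτs
    _ = 1 + 2 * Lf / (1 - 2 * Lf * τs) * τ := by ring

/-- Lipschitz stability of the implicit Euler step on the kernel of the constraint. -/
theorem implicit_euler_lipschitz
    {H : Type*} [NormedAddCommGroup H] [InnerProductSpace ℝ H]
    (K : Submodule ℝ H) (A : H →ₗ[ℝ] H)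
    (hA : ∀ w ∈ K, (0 : ℝ) ≤ inner ℝ (A w) w)
    (Lf τ τs : ℝ) (hLf : 0 ≤ Lf) (hτ : 0 < τ) (hττs : τ ≤ τs) (hτs : 2 * Lf * τs < 1)
    (w₀ w₁ r : H) (hw₀ : w₀ ∈ K) (hw₁ : w₁ ∈ K)
    (hr : ‖r‖ ≤ Lf * ‖w₁‖)
    (hvar : ∀ z ∈ K, (inner ℝ (w₁ - w₀) z : ℝ) + τ * inner ℝ (A w₁) z = τ * inner ℝ r z) :
    ‖w₁‖ ≤ (1 - 2 * Lf * τ) ^ (-(1 : ℝ) / 2) * ‖w₀‖ ∧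
    (1 - 2 * Lf * τ) ^ (-(1 : ℝ) / 2) * ‖w₀‖ ≤ (1 + (2 * Lf / (1 - 2 * Lf * τs)) * τ) * ‖w₀‖ :=
  implicit_euler_lipschitz_general K A hA Lf τ τs hLf hτ hττs hτs w₀ w₁ r hw₁ hr hvar
end

section
/- Let H be a real inner product space, K ⊆ H a linear subspace, and A : H → H a linear map such that ⟨A w, w⟩ ≥ 0 for all w ∈ K. Let L_f ≥ 0 and 0 < τ ≤ τ* < 1/L_f. Suppose w₀, w₁ ∈ K and r ∈ H satisfy ‖r‖ ≤ (L_f / 2) ‖w₀ + w₁‖ and the variational identity ⟨w₁ − w₀, z⟩ + (τ/2) ⟨A (w₀ + w₁), z⟩ = τ ⟨r, z⟩ for all z ∈ K. Then ‖w₁‖ ≤ (1 − L_f τ)^{−1/2} (1 + L_f τ)^{1/2} ‖w₀‖ ≤ (1 + L_Ψ τ) ‖w₀‖, where L_Ψ = 2 L_f / (1 − L_f τ*). -/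
/-!
Testing the variational identity with the midpoint direction `z = w₀ + w₁ ∈ K` turns its first
term into `‖w₁‖² - ‖w₀‖²`, and monotonicity of `A` on `K` drops the second, so
`‖w₁‖² - ‖w₀‖² ≤ τ ⟪r, w₀ + w₁⟫ ≤ (L_f τ / 2) ‖w₀ + w₁‖² ≤ L_f τ (‖w₀‖² + ‖w₁‖²)`, i.e.
`(1 - L_f τ) ‖w₁‖² ≤ (1 + L_f τ) ‖w₀‖²`. Taking square roots gives the first bound; the second
follows from `√q ≤ q` for `q = (1 + L_f τ) / (1 - L_f τ) ≥ 1` and `q = 1 + 2 L_f τ / (1 - L_f τ)`.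
-/

open Real

section InnerProductSpace

variable {H : Type*} [NormedAddCommGroup H] [InnerProductSpace ℝ H]

lemma real_inner_sub_add_eq_norm_sq_sub_norm_sq (x y : H) :
    inner ℝ (x - y) (y + x) = ‖x‖ ^ 2 - ‖y‖ ^ 2 := by
  rw [inner_sub_left, inner_add_right, inner_add_right, real_inner_self_eq_norm_sq,
    real_inner_self_eq_norm_sq, real_inner_comm x y]
  ring

lemma one_sub_mul_norm_sq_le_of_midpoint_step {A : H → H} {L τ : ℝ} (hL : 0 ≤ L) (hτ : 0 ≤ τ)
    {w₀ w₁ r : H} (hA : 0 ≤ inner ℝ (A (w₀ + w₁)) (w₀ + w₁)) (hr : ‖r‖ ≤ L / 2 * ‖w₀ + w₁‖)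
    (hstep : inner ℝ (w₁ - w₀) (w₀ + w₁) + τ / 2 * inner ℝ (A (w₀ + w₁)) (w₀ + w₁) =
      τ * inner ℝ r (w₀ + w₁)) :
    (1 - L * τ) * ‖w₁‖ ^ 2 ≤ (1 + L * τ) * ‖w₀‖ ^ 2 := by
  have hforcing : inner ℝ r (w₀ + w₁) ≤ L / 2 * ‖w₀ + w₁‖ ^ 2 :=
    calc inner ℝ r (w₀ + w₁) ≤ ‖r‖ * ‖w₀ + w₁‖ := real_inner_le_norm r _
      _ ≤ L / 2 * ‖w₀ + w₁‖ * ‖w₀ + w₁‖ := mul_le_mul_of_nonneg_right hr (norm_nonneg _)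
      _ = L / 2 * ‖w₀ + w₁‖ ^ 2 := by ring
  have henergy : ‖w₁‖ ^ 2 - ‖w₀‖ ^ 2 ≤ τ * (L / 2 * ‖w₀ + w₁‖ ^ 2) := by
    rw [real_inner_sub_add_eq_norm_sq_sub_norm_sq] at hstep
    nlinarith [mul_le_mul_of_nonneg_left hforcing hτ]
  have hsum : ‖w₀ + w₁‖ ^ 2 ≤ 2 * (‖w₀‖ ^ 2 + ‖w₁‖ ^ 2) :=
    (pow_le_pow_left₀ (norm_nonneg _) (norm_add_le w₀ w₁) 2).trans add_sq_le
  nlinarith [mul_le_mul_of_nonneg_left hsum (mul_nonneg hL hτ)]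

end InnerProductSpace

lemma rpow_neg_half_mul_rpow_half {x : ℝ} (hx : 0 ≤ x) (y : ℝ) :
    x ^ (-(1 : ℝ) / 2) * y ^ ((1 : ℝ) / 2) = √(y / x) := by
  rw [neg_div, rpow_neg hx, ← sqrt_eq_rpow, ← sqrt_eq_rpow, sqrt_div' y hx]
  ring

lemma le_sqrt_div_mul_of_mul_sq_le {b c x y : ℝ} (hb : 0 < b) (hy : 0 ≤ y)
    (h : b * x ^ 2 ≤ c * y ^ 2) : x ≤ √(c / b) * y := by
  have hx : x ^ 2 ≤ c / b * y ^ 2 := by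
    rw [div_mul_eq_mul_div, le_div_iff₀ hb]
    linarith
  calc x ≤ |x| := le_abs_self x
    _ ≤ √(c / b * y ^ 2) := abs_le_sqrt hx
    _ = √(c / b) * y := by rw [sqrt_mul' _ (sq_nonneg y), sqrt_sq hy]

lemma one_add_div_one_sub_le {a s : ℝ} (ha : 0 ≤ a) (has : a ≤ s) (hs : s < 1) :
    (1 + a) / (1 - a) ≤ 1 + 2 * a / (1 - s) := by
  have ha1 : 1 - a ≠ 0 := by linarith
  calc (1 + a) / (1 - a) = 1 + 2 * a / (1 - a) := by field_simp; ring
    _ ≤ 1 + 2 * a / (1 - s) := by gcongr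

/-- Lipschitz stability of the midpoint step on the kernel of the constraint. -/
theorem midpoint_lipschitz
    {H : Type*} [NormedAddCommGroup H] [InnerProductSpace ℝ H]
    (K : Submodule ℝ H) (A : H →ₗ[ℝ] H)
    (hA : ∀ w ∈ K, (0 : ℝ) ≤ inner ℝ (A w) w)
    (Lf τ τs : ℝ) (hLf : 0 ≤ Lf) (hτ : 0 < τ) (hττs : τ ≤ τs) (hτs : Lf * τs < 1)
    (w₀ w₁ r : H) (hw₀ : w₀ ∈ K) (hw₁ : w₁ ∈ K)
    (hr : ‖r‖ ≤ (Lf / 2) * ‖w₀ + w₁‖)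
    (hvar : ∀ z ∈ K,
      (inner ℝ (w₁ - w₀) z : ℝ) + (τ / 2) * inner ℝ (A (w₀ + w₁)) z = τ * inner ℝ r z) :
    ‖w₁‖ ≤ (1 - Lf * τ) ^ (-(1 : ℝ) / 2) * (1 + Lf * τ) ^ ((1 : ℝ) / 2) * ‖w₀‖ ∧
    (1 - Lf * τ) ^ (-(1 : ℝ) / 2) * (1 + Lf * τ) ^ ((1 : ℝ) / 2) * ‖w₀‖ ≤
      (1 + (2 * Lf / (1 - Lf * τs)) * τ) * ‖w₀‖ := by
  have hτ₀ : 0 ≤ Lf * τ := mul_nonneg hLf hτ.le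
  have hττs' : Lf * τ ≤ Lf * τs := mul_le_mul_of_nonneg_left hττs hLf
  have hmid : w₀ + w₁ ∈ K := K.add_mem hw₀ hw₁
  have henergy := one_sub_mul_norm_sq_le_of_midpoint_step hLf hτ.le (hA _ hmid) hr (hvar _ hmid)
  rw [rpow_neg_half_mul_rpow_half (by linarith)]
  refine ⟨le_sqrt_div_mul_of_mul_sq_le (by linarith) (norm_nonneg _) henergy,
    mul_le_mul_of_nonneg_right ?_ (norm_nonneg _)⟩
  have hq : 1 ≤ (1 + Lf * τ) / (1 - Lf * τ) := by rw [le_div_iff₀ (by linarith)]; linarith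
  calc √((1 + Lf * τ) / (1 - Lf * τ)) ≤ (1 + Lf * τ) / (1 - Lf * τ) := sqrt_le_self_iff.2 (.inr hq)
    _ ≤ 1 + 2 * (Lf * τ) / (1 - Lf * τs) := one_add_div_one_sub_le hτ₀ hττs' hτs
    _ = 1 + 2 * Lf / (1 - Lf * τs) * τ := by ring
end

section
/- Let A be a real symmetric positive definite n×n matrix, τ > 0, L_f ≥ 0, c, d ∈ ℝⁿ, and let f : ℝⁿ → ℝⁿ satisfy ‖f(x) − f(y)‖ ≤ L_f ‖x − y‖ for all x, y ∈ ℝⁿ. Define the exponential Euler map Ψ_τ(v) = exp(−τA) v + A⁻¹ (I − exp(−τA)) ( f(v + c) − d ). Then for all v₁, v₂ ∈ ℝⁿ, ‖Ψ_τ(v₁) − Ψ_τ(v₂)‖ ≤ (1 + τ L_f) ‖v₁ − v₂‖. -/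
/-!
Both `exp (-τA)` and `A⁻¹ (I - exp (-τA))` are functions of the self-adjoint `A` in the sense of
the continuous functional calculus, so their `ℓ²` operator norms are the largest values of
`exp (-τλ) ≤ 1` and `λ⁻¹ (1 - exp (-τλ)) ≤ τ` over the positive eigenvalues `λ` of `A`. Since
`Ψ v₁ - Ψ v₂ = exp (-τA) (v₁ - v₂) + A⁻¹ (I - exp (-τA)) (f (v₁ + c) - f (v₂ + c))`, the
triangle inequality and the Lipschitz bound on `f` give the constant `1 + τ L_f`.
-/

open Matrix
open scoped Matrix.Norms.L2Operator

namespace Real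

lemma exp_neg_mul_le_one {τ x : ℝ} (hτ : 0 ≤ τ) (hx : 0 ≤ x) : exp (-(τ * x)) ≤ 1 :=
  exp_le_one_iff.mpr (neg_nonpos.mpr (mul_nonneg hτ hx))

lemma abs_inv_mul_one_sub_exp_neg_mul_le {τ x : ℝ} (hτ : 0 ≤ τ) (hx : 0 ≤ x) :
    |x⁻¹ * (1 - exp (-(τ * x)))| ≤ τ := by
  have h_nonneg : 0 ≤ 1 - exp (-(τ * x)) := sub_nonneg.mpr (exp_neg_mul_le_one hτ hx)
  have h_le : 1 - exp (-(τ * x)) ≤ τ * x := by linarith [add_one_le_exp (-(τ * x))]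
  rw [abs_of_nonneg (mul_nonneg (inv_nonneg.mpr hx) h_nonneg)]
  rcases hx.eq_or_lt with rfl | hx_pos
  · simpa using hτ
  · rw [inv_mul_le_iff₀ hx_pos]
    linarith

end Real

namespace Matrix

variable {n : Type*} [Fintype n] [DecidableEq n] {A : Matrix n n ℝ}

lemma IsHermitian.exp_neg_smul_eq_cfc (hA : A.IsHermitian) (τ : ℝ) :
    NormedSpace.exp (-(τ • A)) = cfc (fun x => Real.exp (-(τ * x))) A := by
  have hA' : IsSelfAdjoint A := hA
  rw [cfc_comp' Real.exp (fun x => -(τ * x)) A, cfc_neg (τ * ·) A, cfc_const_mul_id τ A,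
    CFC.real_exp_eq_normedSpace_exp]

lemma PosDef.spectrum_real_pos (hA : A.PosDef) {x : ℝ} (hx : x ∈ spectrum ℝ A) : 0 < x := by
  obtain ⟨i, rfl⟩ := hA.isHermitian.spectrum_real_eq_range_eigenvalues ▸ hx
  exact hA.eigenvalues_pos i

lemma PosDef.inv_mul_one_sub_exp_neg_smul_eq_cfc (hA : A.PosDef) (τ : ℝ) :
    A⁻¹ * (1 - NormedSpace.exp (-(τ • A))) =
      cfc (fun x => x⁻¹ * (1 - Real.exp (-(τ * x)))) A := by
  have hA' : IsSelfAdjoint A := hA.isHermitian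
  have hinv : ContinuousOn (fun x : ℝ => x⁻¹) (spectrum ℝ A) :=
    continuousOn_inv₀.mono fun _ hx => (hA.spectrum_real_pos hx).ne'
  rw [cfc_mul _ _ A hinv, cfc_sub (fun _ => 1) (fun x => Real.exp (-(τ * x))) A,
    cfc_const_one ℝ A, hA.isHermitian.exp_neg_smul_eq_cfc, cfc_ringInverse_id _ hA.isUnit,
    nonsing_inv_eq_ringInverse]

lemma PosSemidef.norm_exp_neg_smul_le_one (hA : A.PosSemidef) {τ : ℝ} (hτ : 0 ≤ τ) :
    ‖NormedSpace.exp (-(τ • A))‖ ≤ 1 := by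
  have h_spec := (posSemidef_iff_isHermitian_and_spectrum_nonneg.mp hA).2
  rw [hA.isHermitian.exp_neg_smul_eq_cfc]
  refine norm_cfc_le zero_le_one fun x hx => ?_
  rw [Real.norm_of_nonneg (Real.exp_nonneg _)]
  exact Real.exp_neg_mul_le_one hτ (h_spec hx)

lemma PosDef.norm_inv_mul_one_sub_exp_neg_smul_le (hA : A.PosDef) {τ : ℝ} (hτ : 0 ≤ τ) :
    ‖A⁻¹ * (1 - NormedSpace.exp (-(τ • A)))‖ ≤ τ := by
  rw [hA.inv_mul_one_sub_exp_neg_smul_eq_cfc]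
  exact norm_cfc_le hτ fun x hx =>
    Real.abs_inv_mul_one_sub_exp_neg_mul_le hτ (hA.spectrum_real_pos hx).le

end Matrix

theorem exponential_euler_lipschitz_general (n : ℕ) (A : Matrix (Fin n) (Fin n) ℝ)
    (hsymm : A.IsSymm) (hpd : ∀ x : Fin n → ℝ, x ≠ 0 → 0 < x ⬝ᵥ A.mulVec x)
    (τ : ℝ) (hτ : 0 < τ) (Lf : ℝ)
    (c d : EuclideanSpace ℝ (Fin n))
    (f : EuclideanSpace ℝ (Fin n) → EuclideanSpace ℝ (Fin n))
    (hf : ∀ x y, ‖f x - f y‖ ≤ Lf * ‖x - y‖)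
    (Ψ : EuclideanSpace ℝ (Fin n) → EuclideanSpace ℝ (Fin n))
    (hΨ : ∀ v, Ψ v = Matrix.toEuclideanLin (NormedSpace.exp (-(τ • A))) v +
      Matrix.toEuclideanLin (A⁻¹ * (1 - NormedSpace.exp (-(τ • A)))) (f (v + c) - d))
    (v₁ v₂ : EuclideanSpace ℝ (Fin n)) :
    ‖Ψ v₁ - Ψ v₂‖ ≤ (1 + τ * Lf) * ‖v₁ - v₂‖ := by
  have hA : A.PosDef :=
    .of_dotProduct_mulVec_pos (isHermitian_iff_isSymm.mpr hsymm) fun x hx => hpd x hx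
  set E := NormedSpace.exp (-(τ • A))
  set M := A⁻¹ * (1 - E)
  have h_diff : Ψ v₁ - Ψ v₂ =
      toEuclideanLin E (v₁ - v₂) + toEuclideanLin M (f (v₁ + c) - f (v₂ + c)) := by
    rw [hΨ, hΨ, add_sub_add_comm, ← map_sub, ← map_sub, sub_sub_sub_cancel_right]
  have h_f : ‖f (v₁ + c) - f (v₂ + c)‖ ≤ Lf * ‖v₁ - v₂‖ := by
    simpa only [add_sub_add_right_eq_sub] using hf (v₁ + c) (v₂ + c)
  calc ‖Ψ v₁ - Ψ v₂‖
      ≤ ‖E‖ * ‖v₁ - v₂‖ + ‖M‖ * ‖f (v₁ + c) - f (v₂ + c)‖ := h_diff ▸ norm_add_le_of_le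
          ((toEuclideanCLM (𝕜 := ℝ) E).le_opNorm _) ((toEuclideanCLM (𝕜 := ℝ) M).le_opNorm _)
    _ ≤ 1 * ‖v₁ - v₂‖ + τ * (Lf * ‖v₁ - v₂‖) := by
        gcongr
        · exact hA.posSemidef.norm_exp_neg_smul_le_one hτ.le
        · exact hA.norm_inv_mul_one_sub_exp_neg_smul_le hτ.le
    _ = (1 + τ * Lf) * ‖v₁ - v₂‖ := by ring

/-- Lipschitz property of the exponential Euler step (kernel variables, matrix case). -/
theorem exponential_euler_lipschitz (n : ℕ) (A : Matrix (Fin n) (Fin n) ℝ)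
    (hsymm : A.IsSymm) (hpd : ∀ x : Fin n → ℝ, x ≠ 0 → 0 < x ⬝ᵥ A.mulVec x)
    (τ : ℝ) (hτ : 0 < τ) (Lf : ℝ) (hLf : 0 ≤ Lf)
    (c d : EuclideanSpace ℝ (Fin n))
    (f : EuclideanSpace ℝ (Fin n) → EuclideanSpace ℝ (Fin n))
    (hf : ∀ x y, ‖f x - f y‖ ≤ Lf * ‖x - y‖)
    (Ψ : EuclideanSpace ℝ (Fin n) → EuclideanSpace ℝ (Fin n))
    (hΨ : ∀ v, Ψ v = Matrix.toEuclideanLin (NormedSpace.exp (-(τ • A))) v +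
      Matrix.toEuclideanLin (A⁻¹ * (1 - NormedSpace.exp (-(τ • A)))) (f (v + c) - d))
    (v₁ v₂ : EuclideanSpace ℝ (Fin n)) :
    ‖Ψ v₁ - Ψ v₂‖ ≤ (1 + τ * Lf) * ‖v₁ - v₂‖ :=
  exponential_euler_lipschitz_general n A hsymm hpd τ hτ Lf c d f hf Ψ hΨ v₁ v₂
end

section
/- Let A be a real symmetric positive definite n×n matrix, τ* > 0, L_f ≥ 0, c, c', d, d' ∈ ℝⁿ, and let f, f₊ : ℝⁿ → ℝⁿ each satisfy a Lipschitz condition with constant L_f. For τ ∈ (0, τ*], define Ψ_Eul(v) = exp(−τA) v + A⁻¹ (I − exp(−τA)) ( f(v + c) − d ) and the second-order exponential integrator map Ψ_τ(v) = Ψ_Eul(v) + (1/τ) A⁻² (exp(−τA) − I + τA) [ f₊(Ψ_Eul(v) + c') − d' − f(v + c) + d ]. Then there exists a constant L̃ > 0, depending only on L_f and τ* (for instance L̃ = 2 L_f + (τ*/2) L_f²), such that for all τ ∈ (0, τ*] and all v₁, v₂ ∈ ℝⁿ, ‖Ψ_τ(v₁) − Ψ_τ(v₂)‖ ≤ (1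 + τ L̃) ‖v₁ − v₂‖. -/
/-!
For symmetric positive definite `A` the matrices `exp (-τA)`, `A⁻¹ (I - exp (-τA))` and
`A⁻² (exp (-τA) - I + τA)` are `g A` for scalar functions `g` in the continuous functional
calculus, so their spectral norms are bounded by `sup |g|` over `(0, ∞)`, namely by `1`, `τ` and
`τ² / 2`, using `0 ≤ 1 - e⁻ʸ ≤ y` and `0 ≤ e⁻ʸ - 1 + y ≤ y² / 2` for `y ≥ 0`. The Euler step is
then `(1 + τ L_f)`-Lipschitz, and the correction term adds `(τ / 2) L_f (2 + τ L_f)`.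
-/

open Matrix NormedSpace

namespace Real

lemma exp_neg_sub_one_add_le_sq_div_two {y : ℝ} (hy : 0 ≤ y) :
    exp (-y) - 1 + y ≤ y ^ 2 / 2 := by
  have hderiv (t : ℝ) :
      HasDerivAt (fun t => t ^ 2 / 2 - (exp (-t) - 1 + t)) (t - 1 + exp (-t)) t := by
    refine (((hasDerivAt_pow 2 t).div_const 2).sub
      (((hasDerivAt_neg t).exp.sub_const 1).add (hasDerivAt_id' t))).congr_deriv ?_
    norm_num
    ring
  have hmono := monotone_of_hasDerivAt_nonneg hderiv fun t => by
    simp only [Pi.zero_apply]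
    linarith [add_one_le_exp (-t)]
  simpa using hmono hy

end Real

lemma IsStrictlyPositive.continuousOn_inv_spectrum {A : Type*} [Ring A] [PartialOrder A]
    [Algebra ℝ A] [NonnegSpectrumClass ℝ A] {a : A} (ha : IsStrictlyPositive a) :
    ContinuousOn (·⁻¹) (spectrum ℝ a) :=
  continuousOn_inv₀.mono fun _ hx => (ha.spectrum_pos hx).ne'

section SpectralBounds

variable {A : Type*} [NormedRing A] [StarRing A] [NormedAlgebra ℝ A]
  [IsometricContinuousFunctionalCalculus ℝ A IsSelfAdjoint]

lemma exp_neg_smul_eq_cfc [StarModule ℝ A] {a : A} (ha : IsSelfAdjoint a) (τ : ℝ) :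
    exp (-(τ • a)) = cfc (fun x => Real.exp (-(τ * x))) a := by
  rw [← CFC.real_exp_eq_normedSpace_exp, cfc_comp' Real.exp (fun x => -(τ * x)) a,
    cfc_neg (fun x => τ * x), cfc_const_mul τ (fun x => x), cfc_id' ℝ a]

variable [PartialOrder A] [NonnegSpectrumClass ℝ A] {a : A}

lemma IsStrictlyPositive.norm_cfc_le {f : ℝ → ℝ} {c : ℝ} (ha : IsStrictlyPositive a) (hc : 0 ≤ c)
    (hf : ∀ x, 0 < x → |f x| ≤ c) : ‖cfc f a‖ ≤ c :=
  _root_.norm_cfc_le hc fun x hx => hf x (ha.spectrum_pos hx)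

variable [StarOrderedRing A] [StarModule ℝ A]

lemma norm_exp_neg_smul_le_one (ha : 0 ≤ a) {τ : ℝ} (hτ : 0 ≤ τ) : ‖exp (-(τ • a))‖ ≤ 1 := by
  rw [exp_neg_smul_eq_cfc ha.isSelfAdjoint]
  refine norm_cfc_le zero_le_one fun x hx => ?_
  have hx : 0 ≤ x := spectrum_nonneg_of_nonneg ha hx
  rw [Real.norm_of_nonneg (Real.exp_nonneg _), Real.exp_le_one_iff, neg_nonpos]
  positivity

lemma ringInverse_mul_one_sub_exp_eq_cfc (ha : IsStrictlyPositive a) (τ : ℝ) :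
    Ring.inverse a * (1 - exp (-(τ • a))) = cfc (fun x => x⁻¹ * (1 - Real.exp (-(τ * x)))) a := by
  rw [cfc_mul (·⁻¹) _ a ha.continuousOn_inv_spectrum, cfc_sub (fun _ => 1) _ a,
    cfc_const_one ℝ a, cfc_ringInverse_id a ha.isUnit, exp_neg_smul_eq_cfc ha.isSelfAdjoint]

lemma norm_ringInverse_mul_one_sub_exp_le (ha : IsStrictlyPositive a) {τ : ℝ} (hτ : 0 ≤ τ) :
    ‖Ring.inverse a * (1 - exp (-(τ • a)))‖ ≤ τ := by
  rw [ringInverse_mul_one_sub_exp_eq_cfc ha]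
  refine ha.norm_cfc_le hτ fun x hx => ?_
  have hτx : 0 ≤ τ * x := by positivity
  have h0 : 0 ≤ 1 - Real.exp (-(τ * x)) := by
    rw [sub_nonneg, Real.exp_le_one_iff]; linarith
  rw [abs_of_nonneg (by positivity), inv_mul_le_iff₀ hx, mul_comm x]
  linarith [Real.add_one_le_exp (-(τ * x))]

lemma ringInverse_sq_mul_exp_sub_eq_cfc (ha : IsStrictlyPositive a) (τ : ℝ) :
    Ring.inverse a * Ring.inverse a * (exp (-(τ • a)) - 1 + τ • a) =
      cfc (fun x => x⁻¹ * x⁻¹ * (Real.exp (-(τ * x)) - 1 + τ * x)) a := by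
  have hinv := ha.continuousOn_inv_spectrum
  rw [cfc_mul (fun x => x⁻¹ * x⁻¹) _ a (hinv.mul hinv), cfc_mul (·⁻¹) (·⁻¹) a hinv hinv,
    cfc_add (a := a) (fun x => Real.exp (-(τ * x)) - 1) (fun x => τ * x), cfc_sub _ (fun _ => 1) a,
    cfc_const_one ℝ a, cfc_const_mul τ (fun x => x), cfc_id' ℝ a, cfc_ringInverse_id a ha.isUnit,
    exp_neg_smul_eq_cfc ha.isSelfAdjoint]

lemma norm_ringInverse_sq_mul_exp_sub_le (ha : IsStrictlyPositive a) {τ : ℝ} (hτ : 0 ≤ τ) :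
    ‖Ring.inverse a * Ring.inverse a * (exp (-(τ • a)) - 1 + τ • a)‖ ≤ τ ^ 2 / 2 := by
  rw [ringInverse_sq_mul_exp_sub_eq_cfc ha]
  refine ha.norm_cfc_le (by positivity) fun x hx => ?_
  have hτx : 0 ≤ τ * x := by positivity
  have h0 : 0 ≤ Real.exp (-(τ * x)) - 1 + τ * x := by linarith [Real.add_one_le_exp (-(τ * x))]
  rw [abs_of_nonneg (by positivity), ← mul_inv, inv_mul_le_iff₀ (by positivity)]
  calc Real.exp (-(τ * x)) - 1 + τ * x ≤ (τ * x) ^ 2 / 2 :=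
        Real.exp_neg_sub_one_add_le_sq_div_two hτx
    _ = x * x * (τ ^ 2 / 2) := by ring

end SpectralBounds

namespace Matrix

variable {ι : Type*} [Fintype ι] [DecidableEq ι]

open scoped Norms.L2Operator in
lemma norm_toEuclideanLin_apply_le (M : Matrix ι ι ℝ) (x : EuclideanSpace ℝ ι) :
    ‖toEuclideanLin M x‖ ≤ ‖M‖ * ‖x‖ :=
  (toEuclideanCLM (𝕜 := ℝ) M).le_opNorm x

namespace PosDef

open scoped Norms.L2Operator MatrixOrder

variable {A : Matrix ι ι ℝ} {τ : ℝ}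

lemma norm_toEuclideanLin_exp_neg_smul_apply_le (hA : A.PosDef) (hτ : 0 ≤ τ)
    (x : EuclideanSpace ℝ ι) : ‖toEuclideanLin (exp (-(τ • A))) x‖ ≤ 1 * ‖x‖ :=
  (norm_toEuclideanLin_apply_le _ x).trans <| by
    gcongr; exact norm_exp_neg_smul_le_one hA.posSemidef.nonneg hτ

lemma norm_toEuclideanLin_inv_mul_one_sub_exp_apply_le (hA : A.PosDef) (hτ : 0 ≤ τ)
    (x : EuclideanSpace ℝ ι) : ‖toEuclideanLin (A⁻¹ * (1 - exp (-(τ • A)))) x‖ ≤ τ * ‖x‖ :=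
  (norm_toEuclideanLin_apply_le _ x).trans <| by
    rw [nonsing_inv_eq_ringInverse]
    gcongr; exact norm_ringInverse_mul_one_sub_exp_le hA.isStrictlyPositive hτ

lemma norm_smul_toEuclideanLin_inv_sq_mul_exp_sub_apply_le (hA : A.PosDef) (hτ : 0 < τ)
    (x : EuclideanSpace ℝ ι) :
    ‖((1 / τ) • toEuclideanLin (A⁻¹ * A⁻¹ * (exp (-(τ • A)) - 1 + τ • A))) x‖ ≤ τ / 2 * ‖x‖ := by
  rw [LinearMap.smul_apply, norm_smul, Real.norm_of_nonneg (by positivity)]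
  calc 1 / τ * ‖toEuclideanLin (A⁻¹ * A⁻¹ * (exp (-(τ • A)) - 1 + τ • A)) x‖
      ≤ 1 / τ * (τ ^ 2 / 2 * ‖x‖) := by
        gcongr
        refine (norm_toEuclideanLin_apply_le _ x).trans ?_
        rw [nonsing_inv_eq_ringInverse]
        gcongr; exact norm_ringInverse_sq_mul_exp_sub_le hA.isStrictlyPositive hτ.le
    _ = τ / 2 * ‖x‖ := by field_simp

end PosDef

end Matrix

section ExponentialIntegrator

variable {V : Type*} [SeminormedAddCommGroup V] [Module ℝ V]

def exponentialEulerStep (E P : V →ₗ[ℝ] V) (f : V → V) (c d v : V) : V :=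
  E v + P (f (v + c) - d)

/-- In the integrator `E = exp (-τA)`, `P = τ φ₁(-τA)` and `Q = τ φ₂(-τA)`. -/
def exponentialSecondOrderStep (E P Q : V →ₗ[ℝ] V) (f fp : V → V) (c c' d d' v : V) : V :=
  exponentialEulerStep E P f c d v +
    Q (fp (exponentialEulerStep E P f c d v + c') - d' - f (v + c) + d)

variable {E P Q : V →ₗ[ℝ] V} {f fp : V → V} {KE KP KQ Lf : ℝ}

lemma norm_exponentialEulerStep_sub_le (hKP : 0 ≤ KP) (hE : ∀ x, ‖E x‖ ≤ KE * ‖x‖)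
    (hP : ∀ x, ‖P x‖ ≤ KP * ‖x‖) (hf : ∀ x y, ‖f x - f y‖ ≤ Lf * ‖x - y‖) (c d v₁ v₂ : V) :
    ‖exponentialEulerStep E P f c d v₁ - exponentialEulerStep E P f c d v₂‖ ≤
      (KE + KP * Lf) * ‖v₁ - v₂‖ := by
  have hdiff : exponentialEulerStep E P f c d v₁ - exponentialEulerStep E P f c d v₂ =
      E (v₁ - v₂) + P (f (v₁ + c) - f (v₂ + c)) := by
    simp only [exponentialEulerStep, map_sub]; abel
  have hfc : ‖f (v₁ + c) - f (v₂ + c)‖ ≤ Lf * ‖v₁ - v₂‖ := by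
    simpa using hf (v₁ + c) (v₂ + c)
  calc _ ≤ KE * ‖v₁ - v₂‖ + KP * ‖f (v₁ + c) - f (v₂ + c)‖ :=
        hdiff ▸ (norm_add_le _ _).trans (add_le_add (hE _) (hP _))
    _ ≤ KE * ‖v₁ - v₂‖ + KP * (Lf * ‖v₁ - v₂‖) := by gcongr
    _ = (KE + KP * Lf) * ‖v₁ - v₂‖ := by ring

lemma norm_exponentialSecondOrderStep_sub_le (hLf : 0 ≤ Lf) (hKP : 0 ≤ KP) (hKQ : 0 ≤ KQ)
    (hE : ∀ x, ‖E x‖ ≤ KE * ‖x‖) (hP : ∀ x, ‖P x‖ ≤ KP * ‖x‖) (hQ : ∀ x, ‖Q x‖ ≤ KQ * ‖x‖)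
    (hf : ∀ x y, ‖f x - f y‖ ≤ Lf * ‖x - y‖) (hfp : ∀ x y, ‖fp x - fp y‖ ≤ Lf * ‖x - y‖)
    (c c' d d' v₁ v₂ : V) :
    ‖exponentialSecondOrderStep E P Q f fp c c' d d' v₁ -
        exponentialSecondOrderStep E P Q f fp c c' d d' v₂‖ ≤
      (KE + KP * Lf + KQ * Lf * (KE + KP * Lf + 1)) * ‖v₁ - v₂‖ := by
  set u₁ := exponentialEulerStep E P f c d v₁
  set u₂ := exponentialEulerStep E P f c d v₂
  have hu : ‖u₁ - u₂‖ ≤ (KE + KP * Lf) * ‖v₁ - v₂‖ :=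
    norm_exponentialEulerStep_sub_le hKP hE hP hf c d v₁ v₂
  have hdiff : exponentialSecondOrderStep E P Q f fp c c' d d' v₁ -
      exponentialSecondOrderStep E P Q f fp c c' d d' v₂ =
      (u₁ - u₂) + Q ((fp (u₁ + c') - fp (u₂ + c')) - (f (v₁ + c) - f (v₂ + c))) := by
    simp only [exponentialSecondOrderStep, map_sub, map_add]; abel
  have hq : ‖(fp (u₁ + c') - fp (u₂ + c')) - (f (v₁ + c) - f (v₂ + c))‖ ≤
      Lf * ((KE + KP * Lf) * ‖v₁ - v₂‖) + Lf * ‖v₁ - v₂‖ := by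
    refine (norm_sub_le _ _).trans (add_le_add ?_ (by simpa using hf (v₁ + c) (v₂ + c)))
    calc _ ≤ Lf * ‖u₁ - u₂‖ := by simpa using hfp (u₁ + c') (u₂ + c')
      _ ≤ _ := by gcongr
  calc _ ≤ (KE + KP * Lf) * ‖v₁ - v₂‖ +
        KQ * (Lf * ((KE + KP * Lf) * ‖v₁ - v₂‖) + Lf * ‖v₁ - v₂‖) :=
        hdiff ▸ (norm_add_le _ _).trans (add_le_add hu ((hQ _).trans (by gcongr)))
    _ = _ := by ring

end ExponentialIntegrator

/-- Lipschitz property of the second-order exponential integrator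
(kernel variables, matrix case): there is a constant `L̃ > 0` depending only on the
Lipschitz constant `L_f` and the maximal step size `τ*`. -/
theorem exponential_second_order_lipschitz (Lf τs : ℝ) (hLf : 0 ≤ Lf) (hτs : 0 < τs) :
    ∃ Lt > (0 : ℝ), ∀ (n : ℕ) (A : Matrix (Fin n) (Fin n) ℝ),
      A.IsSymm → (∀ x : Fin n → ℝ, x ≠ 0 → 0 < x ⬝ᵥ A.mulVec x) →
      ∀ (c c' d d' : EuclideanSpace ℝ (Fin n))
        (f fp : EuclideanSpace ℝ (Fin n) → EuclideanSpace ℝ (Fin n)),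
        (∀ x y, ‖f x - f y‖ ≤ Lf * ‖x - y‖) →
        (∀ x y, ‖fp x - fp y‖ ≤ Lf * ‖x - y‖) →
        ∀ (τ : ℝ), 0 < τ → τ ≤ τs →
        ∀ (ΨEul Ψ : EuclideanSpace ℝ (Fin n) → EuclideanSpace ℝ (Fin n)),
          (∀ v, ΨEul v = Matrix.toEuclideanLin (NormedSpace.exp (-(τ • A))) v +
            Matrix.toEuclideanLin (A⁻¹ * (1 - NormedSpace.exp (-(τ • A))))
              (f (v + c) - d)) →
          (∀ v, Ψ v = ΨEul v + (1 / τ) •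
            Matrix.toEuclideanLin
              (A⁻¹ * A⁻¹ * (NormedSpace.exp (-(τ • A)) - 1 + τ • A))
              (fp (ΨEul v + c') - d' - f (v + c) + d)) →
          ∀ v₁ v₂ : EuclideanSpace ℝ (Fin n),
            ‖Ψ v₁ - Ψ v₂‖ ≤ (1 + τ * Lt) * ‖v₁ - v₂‖ := by
  -- the `+ 1` keeps the constant positive when `Lf = 0`
  refine ⟨2 * Lf + τs * Lf ^ 2 / 2 + 1, by positivity, ?_⟩
  intro n A hsym hpos c c' d d' f fp hf hfp τ hτ hττs ΨEul Ψ hΨEul hΨ v₁ v₂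
  have hA : A.PosDef :=
    .of_dotProduct_mulVec_pos (isHermitian_iff_isSymm.mpr hsym) fun x hx => by
      simpa using hpos x hx
  have hΨstep : Ψ = exponentialSecondOrderStep (toEuclideanLin (exp (-(τ • A))))
      (toEuclideanLin (A⁻¹ * (1 - exp (-(τ • A)))))
      ((1 / τ) • toEuclideanLin (A⁻¹ * A⁻¹ * (exp (-(τ • A)) - 1 + τ • A))) f fp c c' d d' := by
    funext v
    simp only [hΨ, hΨEul]
    rfl
  calc ‖Ψ v₁ - Ψ v₂‖ ≤ (1 + τ * Lf + τ / 2 * Lf * (1 + τ * Lf + 1)) * ‖v₁ - v₂‖ :=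
        hΨstep ▸ norm_exponentialSecondOrderStep_sub_le hLf hτ.le (by positivity)
          (hA.norm_toEuclideanLin_exp_neg_smul_apply_le hτ.le)
          (hA.norm_toEuclideanLin_inv_mul_one_sub_exp_apply_le hτ.le)
          (hA.norm_smul_toEuclideanLin_inv_sq_mul_exp_sub_apply_le hτ) hf hfp c c' d d' v₁ v₂
    _ ≤ (1 + τ * (2 * Lf + τs * Lf ^ 2 / 2 + 1)) * ‖v₁ - v₂‖ := by
        gcongr ?_ * _
        nlinarith [mul_le_mul_of_nonneg_left hττs (mul_nonneg hτ.le (sq_nonneg Lf))]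
end
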